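/- arXiv:1101.5621 — 5 statements merged into one kernel-verified Lean document; each statement's English description precedes it below -/
import Mathlib

section
/- In any (possibly infinite) matroid, the relation on the ground set defined by 'x ~ y if and only if x = y or some circuit contains both x and y' is transitive (hence an equivalence relation). -/
open Set Matroid

variable {α : Type*}

/-- A circuit of a (possibly infinite) matroid: a minimal dependent set. -/
def Circuit (M : Matroid α) (C : Set α) : Prop :=
  M.Dep C ∧ ∀ C' ⊂ C, ¬ M.Dep C'

/-- A cocircuit: a circuit of the dual matroid. -/
def Cocircuit (M : Matroid α) (D : Set α) : Prop :=
  Circuit M✶ D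

/-- Deletion of the set `D` from the matroid `M`. -/
def delete (M : Matroid α) (D : Set α) : Matroid α :=
  M ↾ (M.E \ D)

/-- Contraction of the set `C` in the matroid `M`, i.e. `M/C = (M✶ − C)✶`. -/
def contract (M : Matroid α) (C : Set α) : Matroid α :=
  (_root_.delete M✶ C)✶

/-- `del M I J` : the minimum cardinality of a finite `F ⊆ I ∪ J` with
`(I ∪ J) \ F` independent in `M`, or `∞` if no such finite set exists. -/
noncomputable def del (M : Matroid α) (I J : Set α) : ℕ∞ :=
  sInf {n : ℕ∞ | ∃ F : Set α, F.Finite ∧ F ⊆ I ∪ J ∧ M.Indep ((I ∪ J) \ F) ∧ n = F.encard}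

/-- The connectivity function `κ_M(X)`, defined via `del` on bases of `M|X`
and `M|(E \ X)` (its value does not depend on the choice of bases). -/
noncomputable def conn (M : Matroid α) (X : Set α) : ℕ∞ :=
  ⨅ B ∈ {B | (M ↾ X).IsBase B}, ⨅ B' ∈ {B' | (M ↾ (M.E \ X)).IsBase B'}, del M B B'

/-- `κ_M(X,Y) = min {κ_M(U) : X ⊆ U ⊆ E(M) \ Y}`. -/
noncomputable def connBtw (M : Matroid α) (X Y : Set α) : ℕ∞ :=
  ⨅ U ∈ {U | X ⊆ U ∧ U ⊆ M.E \ Y}, conn M U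

/-- `x ~ y` iff `x = y` or some circuit contains both `x` and `y`. -/
def ConnRel (M : Matroid α) (x y : α) : Prop :=
  x = y ∨ ∃ C, Circuit M C ∧ x ∈ C ∧ y ∈ C

/-! Let `C₁ ∋ x, y` and `C₂ ∋ y, z` be circuits with `x ∉ C₂` and `z ∉ C₁`. Extend `C₁ \ {x}` to a
basis `K` of `(C₁ ∪ C₂) \ {x, z}`. The fundamental circuit of `z` in `K` cannot lie inside `C₂`
(it would equal `C₂` and contain `y ∈ C₁`), so it contains some `c ∈ C₁ ∩ K`. Then `x` lies in the
closure of `insert z (K \ {c})` but not of `K \ {c}`, since `C₁` is the unique circuit in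
`insert x K` and it contains `c`; hence some circuit contains both `x` and `z`. -/

namespace Matroid

variable {M : Matroid α} {C C₁ C₂ I X : Set α} {e f x y z : α}

lemma circuit_iff_isCircuit : Circuit M C ↔ M.IsCircuit C := by
  rw [isCircuit_def, minimal_iff_forall_ssubset]
  rfl

lemma exists_isCircuit_of_mem_closure_insert_sdiff (hxz : x ≠ z)
    (hx : x ∈ M.closure (insert z X) \ M.closure X) : ∃ C, M.IsCircuit C ∧ x ∈ C ∧ z ∈ C := by
  have hxX : x ∉ X := fun h ↦ hx.2 (M.mem_closure_of_mem' h (M.mem_ground_of_mem_closure hx.1))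
  obtain ⟨C, hCs, hC, hxC⟩ := exists_isCircuit_of_mem_closure hx.1 (by simp [hxz, hxX])
  refine ⟨C, hC, hxC, by_contra fun hzC ↦ hx.2 ?_⟩
  refine (mem_closure_iff_exists_isCircuit hxX).2 ⟨C, fun a ha ↦ ?_, hC, hxC⟩
  obtain rfl | rfl | haX := hCs ha
  · exact mem_insert a X
  · exact absurd ha hzC
  · exact mem_insert_of_mem x haX

lemma IsCircuit.notMem_closure_sdiff_singleton (hC : M.IsCircuit C) (hI : M.Indep I)
    (hCI : C ⊆ insert e I) (hfC : f ∈ C) (hfe : f ≠ e) : e ∉ M.closure (I \ {f}) := by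
  intro he
  have heI : e ∉ I := fun h ↦ hC.not_indep (hI.subset (by rwa [insert_eq_of_mem h] at hCI))
  obtain ⟨C', hC's, hC', -⟩ := exists_isCircuit_of_mem_closure he (fun h ↦ heI h.1)
  have hC'I : C' ⊆ insert e I := hC's.trans (insert_subset_insert sdiff_subset)
  have hCC' : C = C' := by
    rw [hC.eq_fundCircuit_of_subset hI hCI, hC'.eq_fundCircuit_of_subset hI hC'I]
  obtain h | h := hC's (hCC' ▸ hfC)
  · exact hfe h
  · exact h.2 rfl

lemma IsCircuit.exists_isCircuit_mem_mem_of_mem_inter (hC₁ : M.IsCircuit C₁)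
    (hC₂ : M.IsCircuit C₂) (hxC₁ : x ∈ C₁) (hyC₁ : y ∈ C₁) (hyC₂ : y ∈ C₂) (hzC₂ : z ∈ C₂) :
    ∃ C, M.IsCircuit C ∧ x ∈ C ∧ z ∈ C := by
  by_cases hxC₂ : x ∈ C₂
  · exact ⟨C₂, hC₂, hxC₂, hzC₂⟩
  by_cases hzC₁ : z ∈ C₁
  · exact ⟨C₁, hC₁, hxC₁, hzC₁⟩
  have hxz : x ≠ z := by rintro rfl; exact hxC₂ hzC₂
  obtain ⟨K, hK, hC₁K⟩ := (hC₁.sdiff_singleton_indep hxC₁).subset_isBasis_of_subset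
    (X := (C₁ ∪ C₂) \ {x, z}) (by grind)
    (sdiff_subset.trans (union_subset hC₁.subset_ground hC₂.subset_ground))
  have hzK : z ∉ K := fun h ↦ (hK.subset h).2 (by simp)
  have hzclK : z ∈ M.closure K := by
    rw [hK.closure_eq_closure]
    exact M.closure_subset_closure (by grind) (hC₂.mem_closure_sdiff_singleton_of_mem hzC₂)
  set D := M.fundCircuit z K
  have hD : M.IsCircuit D := hK.indep.fundCircuit_isCircuit hzclK hzK
  have hDK : D ⊆ insert z K := M.fundCircuit_subset_insert z K
  obtain ⟨c, hcD, hcC₁⟩ : ∃ c ∈ D, c ∈ C₁ := by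
    by_contra! h
    have hDC₂ : D ⊆ C₂ := fun a haD ↦ by
      obtain rfl | haK := hDK haD
      · exact hzC₂
      · exact (hK.subset haK).1.resolve_left (h a haD)
    exact h y (hD.eq_of_subset_isCircuit hC₂ hDC₂ ▸ hyC₂) hyC₁
  have hcK : c ∈ K := (hDK hcD).resolve_left (by rintro rfl; exact hzC₁ hcC₁)
  refine exists_isCircuit_of_mem_closure_insert_sdiff (X := K \ {c}) hxz ⟨?_, ?_⟩
  · have hc : c ∈ M.closure (insert z (K \ {c})) := by
      exact M.closure_subset_closure (by grind) (hD.mem_closure_sdiff_singleton_of_mem hcD)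
    have hxK : x ∈ M.closure K :=
      M.closure_subset_closure hC₁K (hC₁.mem_closure_sdiff_singleton_of_mem hxC₁)
    rw [← M.closure_insert_eq_of_mem_closure hc]
    exact M.closure_subset_closure (by grind) hxK
  · refine hC₁.notMem_closure_sdiff_singleton hK.indep ?_ hcC₁ ?_
    · simpa using sdiff_subset_iff.1 hC₁K
    · rintro rfl
      exact (hK.subset hcK).2 (by simp)

end Matroid

theorem stmt5 (M : Matroid α) (x y z : α) (hxy : ConnRel M x y) (hyz : ConnRel M y z) :
    ConnRel M x z := by
  obtain rfl | ⟨C₁, hC₁, hxC₁, hyC₁⟩ := hxy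
  · exact hyz
  obtain rfl | ⟨C₂, hC₂, hyC₂, hzC₂⟩ := hyz
  · exact .inr ⟨C₁, hC₁, hxC₁, hyC₁⟩
  rw [circuit_iff_isCircuit] at hC₁ hC₂
  obtain ⟨C, hC, hxC, hzC⟩ := hC₁.exists_isCircuit_mem_mem_of_mem_inter hC₂ hxC₁ hyC₁ hyC₂ hzC₂
  exact .inr ⟨C, circuit_iff_isCircuit.2 hC, hxC, hzC⟩
end

section
/- Let (X,Y) be a partition of the ground set of a matroid M. For bases B_X, B_X' of M|X and B_Y, B_Y' of M|Y, define del(B_X,B_Y) as the minimum cardinality of a finite set F ⊆ B_X ∪ B_Y with (B_X ∪ B_Y) \ F independent (∞ if no finite such F exists). Then del(B_X, B_Y) = del(B_X', B_Y'). -/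
open Set Matroid

variable {α : Type*}

/-! `del M I J` is the nullity of `I ∪ J`: `|(I ∪ J) \ B|` for any basis `B` of `I ∪ J`.
If `I` is a basis of `X` and `K` is a basis of `J` in `M ／ X`, then `K ∪ I` is a basis of
`J ∪ I`, so the nullity is `|J \ K|`, which no longer depends on `I`. Replacing the basis of `X`,
then (by symmetry) that of `Y`, therefore leaves `del` unchanged. -/

lemma del_comm (M : Matroid α) (I J : Set α) : del M I J = del M J I := by
  rw [del, del, union_comm]

namespace Matroid

variable {M : Matroid α} {B B' I I' J K S X Y : Set α}

lemma IsBasis.encard_sdiff_eq (hB : M.IsBasis B S) (hB' : M.IsBasis B' S) :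
    (S \ B).encard = (S \ B').encard :=
  hB.isBase_restrict.encard_compl_eq.trans hB'.isBase_restrict.encard_compl_eq.symm

lemma IsBasis.del_eq_encard_sdiff (hB : M.IsBasis B (I ∪ J)) :
    del M I J = ((I ∪ J) \ B).encard := by
  refine le_antisymm ?_ (le_sInf ?_)
  · rcases ((I ∪ J) \ B).finite_or_infinite with hfin | hinf
    · refine sInf_le ⟨_, hfin, sdiff_subset, ?_, rfl⟩
      rw [sdiff_sdiff_cancel_left hB.subset]
      exact hB.indep
    · simp [hinf.encard_eq]
  · rintro n ⟨F, -, hFS, hind, rfl⟩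
    obtain ⟨B₁, hB₁, hsub⟩ := hind.subset_isBasis_of_subset sdiff_subset hB.subset_ground
    rw [hB.encard_sdiff_eq hB₁]
    exact encard_le_encard fun x hx ↦ by_contra fun hxF ↦ hx.2 (hsub ⟨hx.1, hxF⟩)

lemma IsBasis.union_isBasis_union_of_contract_isBasis (hI : M.IsBasis I X)
    (hK : (M ／ X).IsBasis K J) : M.IsBasis (K ∪ I) (J ∪ I) := by
  rw [hI.contract_eq_contract_delete, delete_isBasis_iff] at hK
  exact hI.indep.union_isBasis_union_of_contract_isBasis hK.1

lemma IsBasis.del_eq_encard_sdiff_of_contract_isBasis (hI : M.IsBasis I X)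
    (hK : (M ／ X).IsBasis K J) : del M I J = (J \ K).encard := by
  have hJI : Disjoint J I :=
    (subset_sdiff.1 (hK.subset_ground.trans (contract_ground M X).subset)).2.mono_right hI.subset
  have hB : M.IsBasis (K ∪ I) (I ∪ J) :=
    union_comm J I ▸ hI.union_isBasis_union_of_contract_isBasis hK
  rw [hB.del_eq_encard_sdiff]
  congr 1
  tauto_set

lemma IsBasis'.del_eq_del (hI : M.IsBasis' I X) (hI' : M.IsBasis' I' X) (hJ : M.IsBasis' J Y)
    (hXY : Disjoint X Y) : del M I J = del M I' J := by
  have hJX : J ⊆ (M ／ (X ∩ M.E)).E := by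
    rw [contract_ground, subset_sdiff]
    exact ⟨hJ.indep.subset_ground, (hXY.mono_right hJ.subset).symm.mono_right inter_subset_left⟩
  obtain ⟨K, hK⟩ := (M ／ (X ∩ M.E)).exists_isBasis J hJX
  rw [hI.isBasis_inter_ground.del_eq_encard_sdiff_of_contract_isBasis hK,
    hI'.isBasis_inter_ground.del_eq_encard_sdiff_of_contract_isBasis hK]

end Matroid

theorem stmt10_general (M : Matroid α) (X Y : Set α) (hdisj : Disjoint X Y)
    (BX BX' BY BY' : Set α)
    (hBX : (M ↾ X).IsBase BX) (hBX' : (M ↾ X).IsBase BX')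
    (hBY : (M ↾ Y).IsBase BY) (hBY' : (M ↾ Y).IsBase BY') :
    del M BX BY = del M BX' BY' := by
  rw [isBase_restrict_iff'] at hBX hBX' hBY hBY'
  calc del M BX BY = del M BX' BY := hBX.del_eq_del hBX' hBY hdisj
    _ = del M BY BX' := del_comm M BX' BY
    _ = del M BY' BX' := hBY.del_eq_del hBY' hBX' hdisj.symm
    _ = del M BX' BY' := del_comm M BY' BX'

theorem stmt10 (M : Matroid α) (X Y : Set α) (hdisj : Disjoint X Y) (hXY : X ∪ Y = M.E)
    (BX BX' BY BY' : Set α)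
    (hBX : (M ↾ X).IsBase BX) (hBX' : (M ↾ X).IsBase BX')
    (hBY : (M ↾ Y).IsBase BY) (hBY' : (M ↾ Y).IsBase BY') :
    del M BX BY = del M BX' BY' :=
  stmt10_general M X Y hdisj BX BX' BY BY' hBX hBX' hBY hBY'
end

section
/- For a subset X of the ground set of a matroid M and B_X ⊆ X, the following are equivalent: (i) B_X is a basis of the contraction M.X = (M*|X)*; (ii) there exists a basis B of M \ X (the deletion of X's complement restriction, i.e., M restricted to E \ X) such that B_X ∪ B is a basis of M; (iii) for every basis B of M restricted to E \ X, B_X ∪ B is a basis of M. -/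
open Set Matroid

variable {α : Type*}

/-!
Writing `Y = E \ X`, the matroid `M.X = (M✶ ↾ X)✶` is the contraction `M ／ Y`. For any basis `B`
of `Y`, contracting `Y` amounts to contracting `B` and deleting `Y \ B`, which consists of loops
of `M ／ B`; hence the bases of `M ／ Y` are exactly the sets `J ⊆ X` with `J ∪ B` a base of `M`,
whichever basis `B` of `Y` is chosen.
-/

lemma Matroid.Coindep.of_subset_loops {M : Matroid α} {X : Set α} (hX : X ⊆ M.loops) :
    M.Coindep X := by
  have hloops := M✶.coloops_indep
  rw [dual_coloops] at hloops
  exact hloops.subset hX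

lemma Matroid.IsBasis.contract_isBase_iff {M : Matroid α} {B Y J : Set α} (hB : M.IsBasis B Y) :
    (M ／ Y).IsBase J ↔ M.IsBase (J ∪ B) ∧ Disjoint J Y := by
  rw [hB.contract_eq_contract_delete,
    (Coindep.of_subset_loops hB.sdiff_subset_loops_contract).delete_isBase_iff,
    hB.indep.contract_isBase_iff, and_assoc, ← disjoint_union_right, union_sdiff_cancel hB.subset]

lemma Matroid.dual_restrict_dual_eq_contract_compl {M : Matroid α} {X : Set α} (hX : X ⊆ M.E) :
    (M✶ ↾ X)✶ = M ／ (M.E \ X) := by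
  rw [← delete_compl (show X ⊆ M✶.E from hX)]
  rfl

theorem stmt12 (M : Matroid α) (X : Set α) (hX : X ⊆ M.E) (BX : Set α) (hBX : BX ⊆ X) :
    (((M✶ ↾ X)✶).IsBase BX ↔ ∃ B, (M ↾ (M.E \ X)).IsBase B ∧ M.IsBase (BX ∪ B)) ∧
    (((M✶ ↾ X)✶).IsBase BX ↔ ∀ B, (M ↾ (M.E \ X)).IsBase B → M.IsBase (BX ∪ B)) := by
  have hdisj : Disjoint BX (M.E \ X) := disjoint_sdiff_right.mono_left hBX
  have key : ∀ B, (M ↾ (M.E \ X)).IsBase B → (((M✶ ↾ X)✶).IsBase BX ↔ M.IsBase (BX ∪ B)) := by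
    intro B hB
    rw [dual_restrict_dual_eq_contract_compl hX,
      ((isBase_restrict_iff sdiff_subset).1 hB).contract_isBase_iff, and_iff_left hdisj]
  obtain ⟨B₀, hB₀⟩ := (M ↾ (M.E \ X)).exists_isBase
  exact ⟨⟨fun h ↦ ⟨B₀, hB₀, (key B₀ hB₀).1 h⟩, fun ⟨B, hB, h⟩ ↦ (key B hB).2 h⟩,
    ⟨fun h B hB ↦ (key B hB).1 h, fun h ↦ (key B₀ hB₀).2 (h B₀ hB₀)⟩⟩
end

section
/- For any (possibly infinite) matroid M and any subset X of its ground set, κ_M(X) = κ_{M*}(X), where κ is the connectivity function defined via bases. -/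
open Set Matroid

variable {α : Type*}

/-! Given bases `I` of `X` and `J` of `E \ X` and a finite `F` with `(I ∪ J) \ F` independent,
pick a base `B` of `M` with `(I ∪ J) \ F ⊆ B ⊆ I ∪ J`. Extending `J` (resp. `I`) to a base `B'`
inside `J ∪ B` gives a base whose complement meets `X` (resp. `E \ X`) in a basis of `M✶`, and
these two cobases, with the elements of `B` removed, lie in the cobase `E \ B`. The removed
elements number at most `|B \ B'| = |B' \ B| ≤ |J \ B|` on each side, hence at most
`|(I ∪ J) \ B| ≤ |F|` in total. So `κ_{M✶} ≤ κ_M`, and duality gives equality. -/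

namespace Matroid

variable {M : Matroid α} {I J F X Y B : Set α}

lemma del_le_encard (hF : F.Finite) (hFIJ : F ⊆ I ∪ J) (hIJF : M.Indep ((I ∪ J) \ F)) :
    del M I J ≤ F.encard :=
  sInf_le ⟨F, hF, hFIJ, hIJF, rfl⟩

lemma conn_le_del (hX : X ⊆ M.E) (hI : M.IsBasis I X) (hJ : M.IsBasis J (M.E \ X)) :
    conn M X ≤ del M I J :=
  iInf₂_le_of_le I ((isBase_restrict_iff hX).2 hI) <|
    iInf₂_le J ((isBase_restrict_iff sdiff_subset).2 hJ)

lemma le_conn_of_forall_isBasis {n : ℕ∞} (hX : X ⊆ M.E)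
    (h : ∀ I J F, M.IsBasis I X → M.IsBasis J (M.E \ X) → F.Finite → M.Indep ((I ∪ J) \ F) →
      n ≤ F.encard) :
    n ≤ conn M X :=
  le_iInf₂ fun I hI ↦ le_iInf₂ fun J hJ ↦ le_sInf fun _ ⟨F, hF, _, hIJF, hn⟩ ↦
    hn ▸ h I J F ((isBase_restrict_iff hX).1 hI) ((isBase_restrict_iff sdiff_subset).1 hJ)
      hF hIJF

lemma IsBasis.spanning_union_compl (hX : X ⊆ M.E) (hI : M.IsBasis I X)
    (hJ : M.IsBasis J (M.E \ X)) : M.Spanning (I ∪ J) := by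
  rw [spanning_iff_closure_eq (union_subset hI.indep.subset_ground hJ.indep.subset_ground),
    closure_union_congr_left hI.closure_eq_closure,
    closure_union_congr_right hJ.closure_eq_closure,
    union_sdiff_cancel hX, closure_ground]

lemma IsBase.exists_dual_isBasis_compl (hB : M.IsBase B) (hJ : M.IsBasis J Y)
    (hBY : B ∩ Y ⊆ J) :
    ∃ C, M✶.IsBasis C (M.E \ Y) ∧ (C ∩ B).encard ≤ (J \ B).encard := by
  obtain ⟨B', hB', hJB', hB'JB⟩ := hJ.indep.exists_isBase_subset_union_isBase hB
  have hB'Y : B' ∩ Y = J := by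
    refine subset_antisymm (fun e ⟨heB', heY⟩ ↦ ?_) (subset_inter hJB' hJ.subset)
    exact (hB'JB heB').elim id fun heB ↦ hBY ⟨heB, heY⟩
  refine ⟨_, hB'.compl_inter_isBasis_of_inter_isBasis (hB'Y ▸ hJ), ?_⟩
  calc ((M.E \ B') ∩ (M.E \ Y) ∩ B).encard ≤ (B \ B').encard :=
        encard_le_encard fun e he ↦ ⟨he.2, he.1.1.2⟩
    _ = (B' \ B).encard := hB.encard_sdiff_comm hB'
    _ ≤ (J \ B).encard :=
        encard_le_encard fun e he ↦ ⟨(hB'JB he.1).resolve_right he.2, he.2⟩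

lemma conn_dual_le_encard (hX : X ⊆ M.E) (hI : M.IsBasis I X) (hJ : M.IsBasis J (M.E \ X))
    (hF : F.Finite) (hIJF : M.Indep ((I ∪ J) \ F)) :
    conn M✶ X ≤ F.encard := by
  obtain ⟨B, hB, hIJFB, hBIJ⟩ :=
    hIJF.exists_isBase_subset_spanning (hI.spanning_union_compl hX hJ) sdiff_subset
  have hIB : B ∩ X ⊆ I := fun e ⟨heB, heX⟩ ↦
    (hBIJ heB).elim id fun heJ ↦ absurd heX (hJ.subset heJ).2
  have hJB : B ∩ (M.E \ X) ⊆ J := fun e ⟨heB, heX⟩ ↦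
    (hBIJ heB).elim (fun heI ↦ absurd (hI.subset heI) heX.2) id
  obtain ⟨C, hC, hCB⟩ := hB.exists_dual_isBasis_compl hJ hJB
  obtain ⟨D, hD, hDB⟩ := hB.exists_dual_isBasis_compl hI hIB
  rw [sdiff_sdiff_cancel_left hX] at hC
  have hIJ : Disjoint (I \ B) (J \ B) :=
    (disjoint_sdiff_right.mono hI.subset hJ.subset).mono sdiff_subset sdiff_subset
  have hcard : ((C ∪ D) ∩ B).encard ≤ F.encard := calc
    ((C ∪ D) ∩ B).encard ≤ (C ∩ B).encard + (D ∩ B).encard := by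
        rw [union_inter_distrib_right]; exact encard_union_le _ _
    _ ≤ (J \ B).encard + (I \ B).encard := add_le_add hCB hDB
    _ = ((I ∪ J) \ B).encard := by rw [union_sdiff_distrib, encard_union_eq hIJ, add_comm]
    _ ≤ F.encard := encard_le_encard fun e ⟨heIJ, heB⟩ ↦
        by_contra fun heF ↦ heB (hIJFB ⟨heIJ, heF⟩)
  have hindep : M✶.Indep ((C ∪ D) \ ((C ∪ D) ∩ B)) := by
    rw [sdiff_self_inter]
    exact hB.compl_isBase_dual.indep.subset <| sdiff_subset_sdiff_left <|
      union_subset hC.indep.subset_ground hD.indep.subset_ground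
  have hfin : ((C ∪ D) ∩ B).Finite := encard_lt_top_iff.1 (hcard.trans_lt hF.encard_lt_top)
  exact (conn_le_del (M := M✶) hX hC hD).trans <|
    (del_le_encard hfin inter_subset_left hindep).trans hcard

lemma conn_dual_le (hX : X ⊆ M.E) : conn M✶ X ≤ conn M X :=
  le_conn_of_forall_isBasis hX fun _ _ _ hI hJ hF hIJF ↦ conn_dual_le_encard hX hI hJ hF hIJF

end Matroid

theorem stmt13 (M : Matroid α) (X : Set α) (hX : X ⊆ M.E) :
    conn M X = conn M✶ X :=
  le_antisymm (by simpa using conn_dual_le (M := M✶) hX) (conn_dual_le hX)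
end

section
/- The connectivity function κ of a (possibly infinite) matroid is submodular: κ(X) + κ(Y) ≥ κ(X ∪ Y) + κ(X ∩ Y) for all subsets X, Y of the ground set (with values in ℕ ∪ {∞}). -/
open Set Matroid

variable {α : Type*}

/-!
Write `ν S` for the nullity of `S` (the size of `S` minus a basis of `S`), so that
`κ Z = ν (B ∪ C)` for bases `B` of `Z` and `C` of `E \ Z`. If `Z₁` and `Z₂` have bases
`B₁ ⊆ B₂` and their complements have bases `C₂ ⊆ C₁`, computing `ν (B₂ ∪ C₁)` from its spanning
subsets `B₁ ∪ C₁` and `B₂ ∪ C₂` gives `κ Z₂ + |(C₁ \ C₂) \ B₂| = κ Z₁ + |(B₂ \ B₁) \ C₁|`,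
a subtraction-free form of the finite-rank identity
`κ Z₂ - κ Z₁ = (r Z₂ - r Z₁) - (r (E \ Z₁) - r (E \ Z₂))`.
Apply it to `X ⊆ X ∪ Y` and to `X ∩ Y ⊆ Y` with bases chosen compatibly: each error term of
either identity is bounded by one of the other, and one of them by `κ Y`. So when `κ X` and
`κ Y` are finite all error terms are finite and cancel.
-/

namespace Matroid

variable {M : Matroid α} {B B₁ B₂ C F I J K S T W X₁ X₂ Z : Set α}

noncomputable def nullity (M : Matroid α) (X : Set α) : ℕ∞ :=
  (M ↾ X)✶.eRank

lemma nullity_eq_encard_sdiff (hI : M.IsBasis' I S) : M.nullity S = (S \ I).encard := by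
  rw [nullity, ← (isBase_restrict_iff'.2 hI).encard_compl_eq, restrict_ground_eq]

lemma nullity_le_encard_of_indep_sdiff (h : M.Indep (S \ F)) : M.nullity S ≤ F.encard := by
  obtain ⟨I, hI, hSFI⟩ := h.subset_isBasis'_of_subset sdiff_subset
  rw [nullity_eq_encard_sdiff hI]
  exact encard_le_encard fun x hx ↦ by_contra fun hxF ↦ hx.2 (hSFI ⟨hx.1, hxF⟩)

lemma nullity_mono (hST : S ⊆ T) : M.nullity S ≤ M.nullity T := by
  obtain ⟨I, hI⟩ := M.exists_isBasis' T
  rw [nullity_eq_encard_sdiff hI]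
  exact nullity_le_encard_of_indep_sdiff <| hI.indep.subset fun x hx ↦
    by_contra fun hxI ↦ hx.2 ⟨hST hx.1, hxI⟩

lemma nullity_eq_nullity_add_encard_sdiff (hST : S ⊆ T) (hTS : T ⊆ M.closure S) :
    M.nullity T = M.nullity S + (T \ S).encard := by
  obtain ⟨I, hI⟩ := M.exists_isBasis' S
  have hIT : M.IsBasis' I T := (hI.indep.isBasis_of_subset_of_subset_closure
    (hI.subset.trans hST) (hTS.trans_eq hI.closure_eq_closure.symm)).isBasis'
  rw [nullity_eq_encard_sdiff hIT, nullity_eq_encard_sdiff hI,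
    ← encard_union_eq ((disjoint_sdiff_right (s := S) (t := T)).mono_left sdiff_subset),
    union_comm, sdiff_union_sdiff_cancel hST hI.subset]

/-- A set disjoint from `Z` is independent together with `B₁` iff it is with `B₂`: both say that it
is independent in `M ／ Z`. -/
lemma nullity_union_le_of_isBasis (hB₁ : M.IsBasis B₁ Z) (hB₂ : M.IsBasis B₂ Z)
    (hJZ : Disjoint J Z) : M.nullity (B₁ ∪ J) ≤ M.nullity (B₂ ∪ J) := by
  obtain ⟨D, hD, hB₂D⟩ := hB₂.indep.subset_isBasis'_of_subset (subset_union_left (t := J))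
  have hdisj : Disjoint Z (D ∩ J) := (hJZ.mono_left inter_subset_right).symm
  have hind : M.Indep (D ∩ J ∪ B₁) := (hB₁.contract_indep_iff.1
    (hB₂.contract_indep_iff.2 ⟨hD.indep.subset (union_subset inter_subset_left hB₂D), hdisj⟩)).1
  calc M.nullity (B₁ ∪ J)
      ≤ (J \ D).encard := nullity_le_encard_of_indep_sdiff (hind.subset (by tauto_set))
    _ ≤ ((B₂ ∪ J) \ D).encard := encard_le_encard (sdiff_subset_sdiff_left subset_union_right)
    _ = M.nullity (B₂ ∪ J) := (nullity_eq_encard_sdiff hD).symm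

lemma nullity_union_eq_of_isBasis (hB₁ : M.IsBasis B₁ Z) (hB₂ : M.IsBasis B₂ Z)
    (hJZ : Disjoint J Z) : M.nullity (B₁ ∪ J) = M.nullity (B₂ ∪ J) :=
  (nullity_union_le_of_isBasis hB₁ hB₂ hJZ).antisymm (nullity_union_le_of_isBasis hB₂ hB₁ hJZ)

lemma IsBasis.closure_union_eq (hB₁ : M.IsBasis B₁ X₁) (hB₂ : M.IsBasis B₂ X₂) :
    M.closure (B₁ ∪ B₂) = M.closure (X₁ ∪ X₂) :=
  (closure_union_congr_left hB₁.closure_eq_closure).trans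
    (closure_union_congr_right hB₂.closure_eq_closure)

lemma IsBasis.spanning_union_of_compl (hB : M.IsBasis B Z) (hC : M.IsBasis C (M.E \ Z)) :
    M.Spanning (B ∪ C) := by
  rw [spanning_iff_closure_eq (union_subset hB.indep.subset_ground hC.indep.subset_ground),
    hB.closure_union_eq hC, union_sdiff_cancel hB.subset_ground, closure_ground]

lemma IsBasis.exists_isBasis_union_between (hB₁ : M.IsBasis B₁ X₁) (hB₂ : M.IsBasis B₂ X₂) :
    ∃ B, M.IsBasis B (X₁ ∪ X₂) ∧ B₁ ⊆ B ∧ B ⊆ B₁ ∪ B₂ := by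
  obtain ⟨B, hB, hB₁B⟩ := hB₁.indep.subset_isBasis_of_subset (subset_union_left (t := B₂))
    (union_subset hB₁.indep.subset_ground hB₂.indep.subset_ground)
  refine ⟨B, hB.indep.isBasis_of_subset_of_subset_closure
    (hB.subset.trans (union_subset_union hB₁.subset hB₂.subset)) ?_, hB₁B, hB.subset⟩
  rw [hB.closure_eq_closure, hB₁.closure_union_eq hB₂]
  exact M.subset_closure _ (union_subset hB₁.subset_ground hB₂.subset_ground)

lemma Indep.exists_isBasis_superset_encard_sdiff_le (hI : M.Indep I) (hIW : I ⊆ W) (hKW : K ⊆ W)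
    (hW : W ⊆ M.E) : ∃ C, M.IsBasis C W ∧ I ⊆ C ∧ (K \ C).encard ≤ M.nullity (K ∪ I) := by
  obtain ⟨J, hJ, hIJ⟩ := hI.subset_isBasis_of_subset (subset_union_right (s := K))
    (union_subset (hKW.trans hW) (hIW.trans hW))
  obtain ⟨C, hC, hJC⟩ :=
    hJ.indep.subset_isBasis_of_subset (hJ.subset.trans (union_subset hKW hIW)) hW
  refine ⟨C, hC, hIJ.trans hJC, ?_⟩
  rw [nullity_eq_encard_sdiff hJ.isBasis']
  exact encard_le_encard fun x hx ↦ ⟨Or.inl hx.1, fun h ↦ hx.2 (hJC h)⟩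

end Matroid

open Matroid

variable {M : Matroid α} {B B₁ B₂ C C₁ C₂ Z Z₁ Z₂ : Set α}

lemma del_eq_nullity (M : Matroid α) (I J : Set α) : del M I J = M.nullity (I ∪ J) := by
  refine le_antisymm ?_ (le_sInf ?_)
  · obtain ⟨D, hD⟩ := M.exists_isBasis' (I ∪ J)
    rw [nullity_eq_encard_sdiff hD]
    obtain hfin | hinf := ((I ∪ J) \ D).finite_or_infinite
    · refine sInf_le ⟨_, hfin, sdiff_subset, ?_, rfl⟩
      rw [sdiff_sdiff_cancel_left hD.subset]
      exact hD.indep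
    · simp [hinf.encard_eq]
  · rintro n ⟨F, -, -, hF, rfl⟩
    exact nullity_le_encard_of_indep_sdiff hF

lemma conn_eq_nullity (hZ : Z ⊆ M.E) (hB : M.IsBasis B Z) (hC : M.IsBasis C (M.E \ Z)) :
    conn M Z = M.nullity (B ∪ C) := by
  have hCZ : ∀ {C'}, M.IsBasis C' (M.E \ Z) → Disjoint C' Z :=
    fun h ↦ disjoint_sdiff_left.mono_left h.subset
  have hBZ : ∀ {B'}, M.IsBasis B' Z → Disjoint B' (M.E \ Z) :=
    fun h ↦ disjoint_sdiff_right.mono_left h.subset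
  have hconst : ∀ B' C', M.IsBasis B' Z → M.IsBasis C' (M.E \ Z) →
      M.nullity (B' ∪ C') = M.nullity (B ∪ C) := by
    intro B' C' hB' hC'
    rw [nullity_union_eq_of_isBasis hB' hB (hCZ hC'), union_comm,
      nullity_union_eq_of_isBasis hC' hC (hBZ hB), union_comm]
  simp only [conn, del_eq_nullity, mem_ofPred_eq, isBase_restrict_iff hZ,
    isBase_restrict_iff sdiff_subset]
  exact le_antisymm (iInf₂_le_of_le B hB (iInf₂_le_of_le C hC le_rfl))
    (le_iInf₂ fun B' hB' ↦ le_iInf₂ fun C' hC' ↦ (hconst B' C' hB' hC').ge)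

lemma conn_add_encard_eq (hZ₁ : Z₁ ⊆ M.E) (hZ₂ : Z₂ ⊆ M.E) (hB₁ : M.IsBasis B₁ Z₁)
    (hB₂ : M.IsBasis B₂ Z₂) (hB₁₂ : B₁ ⊆ B₂) (hC₁ : M.IsBasis C₁ (M.E \ Z₁))
    (hC₂ : M.IsBasis C₂ (M.E \ Z₂)) (hC₂₁ : C₂ ⊆ C₁) :
    conn M Z₂ + ((C₁ \ C₂) \ B₂).encard = conn M Z₁ + ((B₂ \ B₁) \ C₁).encard := by
  have hT : B₂ ∪ C₁ ⊆ M.E := union_subset hB₂.indep.subset_ground hC₁.indep.subset_ground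
  have h₁ := nullity_eq_nullity_add_encard_sdiff (union_subset_union_left C₁ hB₁₂)
    (hT.trans_eq (hB₁.spanning_union_of_compl hC₁).closure_eq.symm)
  have h₂ := nullity_eq_nullity_add_encard_sdiff (union_subset_union_right B₂ hC₂₁)
    (hT.trans_eq (hB₂.spanning_union_of_compl hC₂).closure_eq.symm)
  rw [conn_eq_nullity hZ₁ hB₁ hC₁, conn_eq_nullity hZ₂ hB₂ hC₂]
  convert h₂.symm.trans h₁ using 3 <;> ext <;> simp <;> tauto

lemma sdiff_sdiff_subset_sdiff_sdiff {U V B₁ B₂ B₁' B₂' I : Set α} (hU : U ⊆ B₁ ∪ B₂)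
    (hI : I ⊆ B₁) (hV : V ⊆ B₂' ∪ B₁') (hB₂ : Disjoint B₂ B₂') :
    (U \ B₁) \ B₁' ⊆ (B₂ \ I) \ V := by
  rintro x ⟨⟨hxU, hxB₁⟩, hxB₁'⟩
  have hxB₂ : x ∈ B₂ := (hU hxU).resolve_left hxB₁
  refine ⟨⟨hxB₂, fun h ↦ hxB₁ (hI h)⟩, fun hxV ↦ ?_⟩
  exact (hV hxV).elim (fun h ↦ hB₂.ne_of_mem hxB₂ h rfl) hxB₁'

lemma ENat.add_le_add_of_add_eq_add {a b c d u₁ u₂ x₁ x₂ : ℕ∞} (h₁ : a + u₁ = c + x₁)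
    (h₂ : d + x₂ = b + u₂) (hx₁ : x₁ ≤ u₂) (hx₂ : x₂ ≤ u₁) (hx₁d : x₁ ≤ d) : a + b ≤ c + d := by
  obtain rfl | hc := eq_or_ne c ⊤
  · simp
  obtain rfl | hd := eq_or_ne d ⊤
  · simp
  have hu₁ : u₁ ≠ ⊤ := ne_top_of_le_ne_top (WithTop.add_ne_top.2 ⟨hc, hd⟩)
    (calc u₁ ≤ a + u₁ := le_add_self
      _ = c + x₁ := h₁
      _ ≤ c + d := by gcongr)
  have hu₂ : u₂ ≠ ⊤ := ne_top_of_le_ne_top (WithTop.add_ne_top.2 ⟨hd, hu₁⟩)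
    (calc u₂ ≤ b + u₂ := le_add_self
      _ = d + x₂ := h₂.symm
      _ ≤ d + u₁ := by gcongr)
  refine (ENat.add_le_add_iff_right (WithTop.add_ne_top.2 ⟨hu₁, hu₂⟩)).1 ?_
  calc a + b + (u₁ + u₂) = (a + u₁) + (b + u₂) := by ring
    _ = (c + x₁) + (d + x₂) := by rw [h₁, h₂]
    _ ≤ (c + u₂) + (d + u₁) := by gcongr
    _ = c + d + (u₁ + u₂) := by ring

theorem stmt15 (M : Matroid α) (X Y : Set α) (hX : X ⊆ M.E) (hY : Y ⊆ M.E) :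
    conn M (X ∪ Y) + conn M (X ∩ Y) ≤ conn M X + conn M Y := by
  obtain ⟨IP, hIP⟩ := M.exists_isBasis (X ∩ Y) (inter_subset_left.trans hX)
  obtain ⟨BX, hBX, hIPBX⟩ :=
    hIP.indep.subset_isBasis_of_subset (hIP.subset.trans inter_subset_left) hX
  obtain ⟨BY, hBY, hIPBY⟩ :=
    hIP.indep.subset_isBasis_of_subset (hIP.subset.trans inter_subset_right) hY
  obtain ⟨BU, hBU, hBXBU, hBUsub⟩ := hBX.exists_isBasis_union_between hBY
  have hK : BU \ BX ⊆ M.E \ X := fun x hx ↦ ⟨hBU.indep.subset_ground hx.1,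
    fun hxX ↦ hx.2 ((hBX.inter_eq_of_subset_indep hBXBU hBU.indep).subset ⟨hx.1, hxX⟩)⟩
  obtain ⟨IS, hIS⟩ := M.exists_isBasis (M.E \ (X ∪ Y)) sdiff_subset
  obtain ⟨BY', hBY', hISBY'⟩ := hIS.indep.subset_isBasis_of_subset
    (hIS.subset.trans (sdiff_subset_sdiff_right subset_union_right)) sdiff_subset
  -- `BX'` meets `BU \ BX` as much as possible, so that `(BU \ BX) \ BX'` is at most `conn M Y`.
  obtain ⟨BX', hBX', hISBX', hfin⟩ := hIS.indep.exists_isBasis_superset_encard_sdiff_le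
    (hIS.subset.trans (sdiff_subset_sdiff_right subset_union_left)) hK sdiff_subset
  obtain ⟨BI', hBI', hBY'BI', hBI'sub⟩ := hBY'.exists_isBasis_union_between hBX'
  rw [← sdiff_inter, inter_comm] at hBI'
  refine ENat.add_le_add_of_add_eq_add
    (conn_add_encard_eq hX (union_subset hX hY) hBX hBU hBXBU hBX' hIS hISBX')
    (conn_add_encard_eq (inter_subset_left.trans hX) hY hIP hBY hIPBY hBI' hBY' hBY'BI')
    (encard_le_encard (sdiff_sdiff_subset_sdiff_sdiff hBUsub hIPBX hBI'sub
      (disjoint_sdiff_right.mono hBY.subset hBY'.subset)))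
    (encard_le_encard (sdiff_sdiff_subset_sdiff_sdiff hBI'sub hISBY' hBUsub
      (disjoint_sdiff_left.mono hBX'.subset hBX.subset)))
    (hfin.trans ?_)
  rw [conn_eq_nullity hY hBY hBY']
  exact nullity_mono (union_subset_union (sdiff_subset_iff.2 hBUsub) hISBY')
end
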